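/- arXiv:1402.4322 — 2 statements merged into one kernel-verified Lean document; each statement's English description precedes it below -/
import Mathlib

section
/- Let (X,d) be a finite metric space with n points. If α ≥ n−1, then SL*(α) coincides with single linkage: θ*_α(t) = θ_SL(t) for all t ≥ 0, and consequently u*_α(x,y) = u_SL(x,y) for all x,y ∈ X. -/
open Relation

def IsMetric {X : Type} (d : X → X → ℝ) : Prop :=
  (∀ x y, 0 ≤ d x y) ∧ (∀ x y, d x y = 0 ↔ x = y) ∧
  (∀ x y, d x y = d y x) ∧ (∀ x y z, d x z ≤ d x y + d y z)

def IsUltrametric {X : Type} (d : X → X → ℝ) : Prop :=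
  IsMetric d ∧ ∀ x y z, d x z ≤ max (d x y) (d y z)

/-- dimension of the Vietoris–Rips complex of `Y ⊆ X` at scale `t`:
(max cardinality of a subset of `Y` with pairwise distances ≤ t) − 1. -/
noncomputable def dimF {X : Type} (d : X → X → ℝ) (t : ℝ) (Y : Set X) : ℝ :=
  sSup { v : ℝ | ∃ S : Finset X, ↑S ⊆ Y ∧ (∀ s ∈ S, ∀ s' ∈ S, d s s' ≤ t) ∧
    v = (S.card : ℝ) - 1 }

/-- the edge condition of the graph `G_α^t` on the blocks of the partition `P`. -/
def IsEdge {X : Type} (d : X → X → ℝ) (α t : ℝ) (P : Set (Set X)) (B B' : Set X) : Prop :=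
  B ∈ P ∧ B' ∈ P ∧ B ≠ B' ∧
  (∃ x ∈ B, ∃ y ∈ B', d x y ≤ t) ∧
  (∃ S : Finset X, ↑S ⊆ B ∪ B' ∧ (∃ s ∈ S, s ∈ B) ∧ (∃ s ∈ S, s ∈ B') ∧
    (∀ s ∈ S, ∀ s' ∈ S, d s s' ≤ t) ∧
    min (dimF d t B) (dimF d t B') ≤ α * ((S.card : ℝ) - 1))

/-- `B` and `B'` lie in the same connected component of `G_α^t`. -/
def SameComp {X : Type} (d : X → X → ℝ) (α t : ℝ) (P : Set (Set X)) (B B' : Set X) : Prop :=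
  ReflTransGen (IsEdge d α t P) B B'

/-- SL(α) merging rule: merge the blocks of each connected component of `G_α^t`. -/
def mergeStep {X : Type} (d : X → X → ℝ) (α t : ℝ) (P : Set (Set X)) : Set (Set X) :=
  { C | ∃ B ∈ P, C = ⋃₀ { B' | B' ∈ P ∧ SameComp d α t P B B' } }

/-- the partition of `X` into singletons. -/
def singletons (X : Type) : Set (Set X) := { C | ∃ x : X, C = {x} }

/-- the sorted list of values taken by `d` that are at most `t`. -/
noncomputable def distVals {X : Type} [Fintype X] (d : X → X → ℝ) (t : ℝ) : List ℝ :=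
  ((Finset.image (fun p : X × X => d p.1 p.2) Finset.univ).filter (· ≤ t)).sort (· ≤ ·)

/-- the dendrogram of SL(α): fold the merging rule over the distance values ≤ t. -/
noncomputable def theta {X : Type} [Fintype X] (d : X → X → ℝ) (α : ℝ) (t : ℝ) :
    Set (Set X) :=
  (distVals d t).foldl (fun P s => mergeStep d α s P) (singletons X)

/-- the ultrametric associated to SL(α). -/
noncomputable def uAlpha {X : Type} [Fintype X] (d : X → X → ℝ) (α : ℝ) (x y : X) : ℝ :=
  sInf { t : ℝ | 0 ≤ t ∧ ∃ B ∈ theta d α t, x ∈ B ∧ y ∈ B }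

/-- `B` is a big block of its connected component `A` of `G_α^t`:
`α·#B ≥ max_{B' ∈ A} #B'`. -/
def IsBig {X : Type} (d : X → X → ℝ) (α t : ℝ) (P : Set (Set X)) (B : Set X) : Prop :=
  B ∈ P ∧ ∀ B', B' ∈ P → SameComp d α t P B B' → (B'.ncard : ℝ) ≤ α * (B.ncard : ℝ)

/-- `B, B'` lie in the same connected component of the subgraph `H_α(A)` of big blocks. -/
def HConn {X : Type} (d : X → X → ℝ) (α t : ℝ) (P : Set (Set X)) (B B' : Set X) : Prop :=
  ReflTransGen (fun C C' => IsEdge d α t P C C' ∧ IsBig d α t P C ∧ IsBig d α t P C') B B'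

/-- `B, B'` lie in the same connected component of the subgraph `S_α(A)` of small blocks. -/
def SConn {X : Type} (d : X → X → ℝ) (α t : ℝ) (P : Set (Set X)) (B B' : Set X) : Prop :=
  ReflTransGen (fun C C' => IsEdge d α t P C C' ∧ ¬ IsBig d α t P C ∧ ¬ IsBig d α t P C')
    B B'

/-- the SL*(α) relation between blocks of a common connected component `A` of `G_α^t`:
either both lie in the same component of `H_α(A)`, or `B` is big, `B'` is small,
and no big block of `A` outside the `H_α(A)`-component of `B` is adjacent to any block
of the `S_α(A)`-component of `B'`. -/
def StarRel {X : Type} (d : X → X → ℝ) (α t : ℝ) (P : Set (Set X)) (B B' : Set X) : Prop :=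
  B ∈ P ∧ B' ∈ P ∧ SameComp d α t P B B' ∧
  ((IsBig d α t P B ∧ IsBig d α t P B' ∧ HConn d α t P B B') ∨
   (IsBig d α t P B ∧ ¬ IsBig d α t P B' ∧
     ∀ D, D ∈ P → SameComp d α t P B D → IsBig d α t P D → ¬ HConn d α t P B D →
       ∀ E, E ∈ P → ¬ IsBig d α t P E → SConn d α t P B' E → ¬ IsEdge d α t P D E))

/-- SL*(α) merging rule: merge blocks according to the equivalence relation generated
by `StarRel`. -/
def mergeStepStar {X : Type} (d : X → X → ℝ) (α t : ℝ) (P : Set (Set X)) : Set (Set X) :=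
  { C | ∃ B ∈ P, C = ⋃₀ { B' | B' ∈ P ∧ EqvGen (StarRel d α t P) B B' } }

/-- the dendrogram of SL*(α). -/
noncomputable def thetaStar {X : Type} [Fintype X] (d : X → X → ℝ) (α : ℝ) (t : ℝ) :
    Set (Set X) :=
  (distVals d t).foldl (fun P s => mergeStepStar d α s P) (singletons X)

/-- the ultrametric associated to SL*(α). -/
noncomputable def uStar {X : Type} [Fintype X] (d : X → X → ℝ) (α : ℝ) (x y : X) : ℝ :=
  sInf { t : ℝ | 0 ≤ t ∧ ∃ B ∈ thetaStar d α t, x ∈ B ∧ y ∈ B }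

/-- there is a `t`-chain from `x` to `y`. -/
def HasChain {X : Type} (d : X → X → ℝ) (r : ℝ) (x y : X) : Prop :=
  ReflTransGen (fun a b => d a b ≤ r) x y

/-- the single linkage dendrogram: the partition into `t`-chain components. -/
def thetaSL {X : Type} (d : X → X → ℝ) (t : ℝ) : Set (Set X) :=
  { C | ∃ x : X, C = { y | HasChain d t x y } }

/-- the single linkage ultrametric. -/
noncomputable def uSL {X : Type} (d : X → X → ℝ) (x y : X) : ℝ :=
  sInf { r : ℝ | 0 ≤ r ∧ HasChain d r x y }

/-!
At every scale `t` the SL*(α) graph on the single linkage partition of scale `r` has an edge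
between any two blocks containing points at distance `≤ t`: the pair of points is a clique of
dimension `1`, and `α ≥ n - 1` dominates every Vietoris–Rips dimension. So its components are
exactly the single linkage blocks of scale `max r t`. Moreover, as soon as there is an edge,
`n ≥ 2` and hence `α ≥ 1`, and every block `B` is big: any other block has at most
`n - #B ≤ (n - 1) #B` points. With all blocks big the finer SL* rule merges whole components,
so each step of SL*(α) is a step of single linkage.
-/

namespace List

lemma foldl_max_le_iff {α : Type*} [LinearOrder α] (L : List α) (b c : α) :
    L.foldl max b ≤ c ↔ b ≤ c ∧ ∀ y ∈ L, y ≤ c := by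
  induction L generalizing b with
  | nil => simp
  | cons a L ih => simp [ih, and_assoc]

lemma le_foldl_max_of_mem {α : Type*} [LinearOrder α] {L : List α} {x : α} (b : α)
    (hx : x ∈ L) : x ≤ L.foldl max b := by
  rw [List.foldl_eq_foldr]
  exact List.le_max_of_le' b hx le_rfl

end List

section Chains

variable {X : Type} {d : X → X → ℝ} {r : ℝ} {x y : X}

lemma HasChain.mono {s : ℝ} (h : r ≤ s) (hc : HasChain d r x y) : HasChain d s x y :=
  ReflTransGen.mono (fun _ _ hab => hab.trans h) _ _ hc

lemma HasChain.symm (hsymm : ∀ a b, d a b = d b a) (hc : HasChain d r x y) :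
    HasChain d r y x :=
  have : Std.Symm (fun a b => d a b ≤ r) := ⟨fun a b h => (hsymm b a).trans_le h⟩
  Std.Symm.symm (r := ReflTransGen fun a b => d a b ≤ r) _ _ hc

lemma setOf_hasChain_eq (hsymm : ∀ a b, d a b = d b a) (h : HasChain d r x y) :
    {w | HasChain d r x w} = {w | HasChain d r y w} :=
  Set.ext fun _ => ⟨(h.symm hsymm).trans, h.trans⟩

lemma hasChain_zero_iff (hd : IsMetric d) : HasChain d 0 x y ↔ x = y := by
  refine ⟨fun h => ?_, fun h => h ▸ ReflTransGen.refl⟩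
  induction h with
  | refl => rfl
  | tail _ hbc ih => exact ih.trans ((hd.2.1 _ _).1 (le_antisymm hbc (hd.1 _ _)))

lemma eq_setOf_hasChain_of_mem_thetaSL (hsymm : ∀ a b, d a b = d b a) {B : Set X}
    (hB : B ∈ thetaSL d r) (hx : x ∈ B) : B = {w | HasChain d r x w} := by
  obtain ⟨a, rfl⟩ := hB
  exact setOf_hasChain_eq hsymm hx

lemma thetaSL_eq_or_disjoint (hsymm : ∀ a b, d a b = d b a) {B B' : Set X}
    (hB : B ∈ thetaSL d r) (hB' : B' ∈ thetaSL d r) : B = B' ∨ Disjoint B B' := by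
  refine or_iff_not_imp_right.2 fun h => ?_
  obtain ⟨x, hxB, hxB'⟩ := Set.not_disjoint_iff.1 h
  rw [eq_setOf_hasChain_of_mem_thetaSL hsymm hB hxB,
    eq_setOf_hasChain_of_mem_thetaSL hsymm hB' hxB']

lemma exists_mem_thetaSL_iff (hsymm : ∀ a b, d a b = d b a) :
    (∃ B ∈ thetaSL d r, x ∈ B ∧ y ∈ B) ↔ HasChain d r x y := by
  refine ⟨fun ⟨B, hB, hx, hy⟩ => ?_, fun h => ⟨_, ⟨x, rfl⟩, ReflTransGen.refl, h⟩⟩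
  rw [eq_setOf_hasChain_of_mem_thetaSL hsymm hB hx] at hy
  exact hy

lemma thetaSL_congr {r' : ℝ} (h : ∀ a b, d a b ≤ r ↔ d a b ≤ r') :
    thetaSL d r = thetaSL d r' := by
  have : (fun a b => d a b ≤ r) = fun a b => d a b ≤ r' := funext₂ fun a b => propext (h a b)
  simp only [thetaSL, HasChain, this]

lemma thetaSL_zero (hd : IsMetric d) : thetaSL d 0 = singletons X := by
  simp only [thetaSL, singletons, hasChain_zero_iff hd, Set.ofPred_eq_eq_singleton']

end Chains

section Merging

variable {X : Type} {d : X → X → ℝ} {α t : ℝ} {P : Set (Set X)}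

lemma isEdge_symm (hsymm : ∀ a b, d a b = d b a) {B B' : Set X} (h : IsEdge d α t P B B') :
    IsEdge d α t P B' B := by
  obtain ⟨hB, hB', hne, ⟨x, hx, y, hy, hxy⟩, S, hS, hSB, hSB', hSt, hdim⟩ := h
  exact ⟨hB', hB, hne.symm, ⟨y, hy, x, hx, (hsymm y x).trans_le hxy⟩,
    S, Set.union_comm B B' ▸ hS, hSB', hSB, hSt, min_comm (dimF d t B) _ ▸ hdim⟩

lemma eqvGen_starRel_eq_sameComp (hsymm : ∀ a b, d a b = d b a)
    (h : ∀ B B', IsEdge d α t P B B' → StarRel d α t P B B') :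
    EqvGen (StarRel d α t P) = SameComp d α t P := by
  have : Std.Symm (IsEdge d α t P) := ⟨fun _ _ => isEdge_symm hsymm⟩
  change EqvGen (StarRel d α t P) = ReflTransGen (IsEdge d α t P)
  rw [← EqvGen.eqvGen_eq_reflTransGen]
  exact le_antisymm
    (EqvGen.eqvGen_le fun B B' hr => EqvGen.reflTransGen_le_eqvGen _ B B' hr.2.2.1)
    (EqvGen.eqvGen_mono h)

lemma mergeStepStar_eq_mergeStep (hsymm : ∀ a b, d a b = d b a)
    (h : ∀ B B', IsEdge d α t P B B' → StarRel d α t P B B') :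
    mergeStepStar d α t P = mergeStep d α t P := by
  simp only [mergeStepStar, mergeStep, eqvGen_starRel_eq_sameComp hsymm h]

lemma starRel_of_isEdge (hbig : ∀ B ∈ P, IsBig d α t P B) {B B' : Set X}
    (h : IsEdge d α t P B B') : StarRel d α t P B B' :=
  have hB := hbig B h.1
  have hB' := hbig B' h.2.1
  ⟨h.1, h.2.1, .single h, .inl ⟨hB, hB', .single ⟨h, hB, hB'⟩⟩⟩

variable [Fintype X]

lemma dimF_le_card_sub_one (Y : Set X) : dimF d t Y ≤ (Fintype.card X : ℝ) - 1 := by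
  refine csSup_le ⟨_, ∅, by simp, by simp, rfl⟩ ?_
  rintro _ ⟨S, -, -, rfl⟩
  have : (S.card : ℝ) ≤ Fintype.card X := by exact_mod_cast S.card_le_univ
  linarith

lemma isEdge_of_dist_le (hd : IsMetric d) (hn : (Fintype.card X : ℝ) - 1 ≤ α)
    {B B' : Set X} (hB : B ∈ P) (hB' : B' ∈ P) {x y : X} (hx : x ∈ B) (hy : y ∈ B')
    (hyB : y ∉ B) (hxy : d x y ≤ t) : IsEdge d α t P B B' := by
  classical
  have hne : x ≠ y := fun h => hyB (h ▸ hx)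
  have ht : 0 ≤ t := (hd.1 x y).trans hxy
  have hdiag : ∀ z, d z z ≤ t := fun z => ((hd.2.1 z z).2 rfl).trans_le ht
  refine ⟨hB, hB', fun h => hyB (h ▸ hy), ⟨x, hx, y, hy, hxy⟩, {x, y}, ?_, ⟨x, by simp, hx⟩,
    ⟨y, by simp, hy⟩, ?_, ?_⟩
  · simp [Set.insert_subset_iff, hx, hy]
  · simp only [Finset.mem_insert, Finset.mem_singleton]
    rintro _ (rfl | rfl) _ (rfl | rfl)
    exacts [hdiag _, hxy, (hd.2.2.1 _ _).trans_le hxy, hdiag _]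
  · rw [Finset.card_pair hne]
    calc min (dimF d t B) (dimF d t B') ≤ dimF d t B := min_le_left _ _
      _ ≤ (Fintype.card X : ℝ) - 1 := dimF_le_card_sub_one B
      _ ≤ α * ((2 : ℕ) - 1 : ℝ) := by norm_num [hn]

end Merging

section SingleLinkage

variable {X : Type} {d : X → X → ℝ} {α : ℝ}

lemma ncard_le_mul_ncard [Fintype X] (h1 : 1 ≤ α) (hn : (Fintype.card X : ℝ) - 1 ≤ α)
    {B B' : Set X} (hB : B.Nonempty) (h : B = B' ∨ Disjoint B B') :
    (B'.ncard : ℝ) ≤ α * B.ncard := by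
  have hB1 : (1 : ℝ) ≤ B.ncard := by exact_mod_cast (Set.ncard_pos B.toFinite).2 hB
  rcases h with rfl | hdisj
  · nlinarith
  · have : B.ncard + B'.ncard ≤ Fintype.card X := by
      rw [← Set.ncard_union_eq hdisj, ← Nat.card_eq_fintype_card]
      exact Set.ncard_le_card _
    have : (B.ncard : ℝ) + B'.ncard ≤ Fintype.card X := by exact_mod_cast this
    nlinarith

lemma isBig_of_mem_thetaSL [Fintype X] (hsymm : ∀ a b, d a b = d b a) (h1 : 1 ≤ α)
    (hn : (Fintype.card X : ℝ) - 1 ≤ α) {r t : ℝ} {B : Set X} (hB : B ∈ thetaSL d r) :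
    IsBig d α t (thetaSL d r) B := by
  refine ⟨hB, fun B' hB' _ => ncard_le_mul_ncard h1 hn ?_ (thetaSL_eq_or_disjoint hsymm hB hB')⟩
  obtain ⟨a, rfl⟩ := hB
  exact ⟨a, ReflTransGen.refl⟩

lemma one_lt_card_of_isEdge_thetaSL [Fintype X] (hsymm : ∀ a b, d a b = d b a) {r t : ℝ}
    {B B' : Set X} (h : IsEdge d α t (thetaSL d r) B B') : 1 < Fintype.card X := by
  obtain ⟨hB, hB', hne, ⟨x, hx, y, hy, -⟩, -⟩ := h
  refine Fintype.one_lt_card_iff.2 ⟨x, y, fun hxy => hne ?_⟩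
  rw [eq_setOf_hasChain_of_mem_thetaSL hsymm hB hx, eq_setOf_hasChain_of_mem_thetaSL hsymm hB' hy,
    hxy]

lemma mergeStepStar_thetaSL_eq_mergeStep [Fintype X] (hsymm : ∀ a b, d a b = d b a)
    (hn : (Fintype.card X : ℝ) - 1 ≤ α) (r t : ℝ) :
    mergeStepStar d α t (thetaSL d r) = mergeStep d α t (thetaSL d r) := by
  refine mergeStepStar_eq_mergeStep hsymm fun B B' h => ?_
  have h1 : 1 ≤ α := by
    have : (2 : ℝ) ≤ Fintype.card X := by exact_mod_cast one_lt_card_of_isEdge_thetaSL hsymm h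
    linarith
  exact starRel_of_isEdge (fun B hB => isBig_of_mem_thetaSL hsymm h1 hn hB) h

lemma subset_setOf_hasChain_of_sameComp (hsymm : ∀ a b, d a b = d b a) {r t : ℝ} {a : X}
    {B : Set X} (h : SameComp d α t (thetaSL d r) {w | HasChain d r a w} B) :
    B ⊆ {w | HasChain d (max r t) a w} := by
  induction h with
  | refl => exact fun _ hw => hw.mono (le_max_left r t)
  | tail _ e ih =>
    obtain ⟨-, ⟨c, rfl⟩, -, ⟨x, hx, y, hy, hxy⟩, -⟩ := e
    intro w hw
    have hyw : HasChain d r y w := (hy.symm hsymm).trans hw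
    exact ((ih hx).tail (hxy.trans (le_max_right r t))).trans (hyw.mono (le_max_left r t))

lemma setOf_hasChain_subset_sUnion_sameComp [Fintype X] (hd : IsMetric d)
    (hn : (Fintype.card X : ℝ) - 1 ≤ α) {r t : ℝ} (a : X) :
    {w | HasChain d (max r t) a w} ⊆
      ⋃₀ {B | B ∈ thetaSL d r ∧ SameComp d α t (thetaSL d r) {w | HasChain d r a w} B} := by
  intro y hy
  induction hy with
  | refl => exact ⟨_, ⟨⟨a, rfl⟩, .refl⟩, ReflTransGen.refl⟩
  | @tail b c _ hbc ih =>
    obtain ⟨B, ⟨hB, hcomp⟩, hbB⟩ := ih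
    by_cases hcB : c ∈ B
    · exact ⟨B, ⟨hB, hcomp⟩, hcB⟩
    -- `c` left the block of `b`, so the step `b → c` is not an `r`-step and must be a `t`-step
    have hbc_t : d b c ≤ t := by
      refine (le_max_iff.1 hbc).resolve_left fun hbc_r => hcB ?_
      rw [eq_setOf_hasChain_of_mem_thetaSL hd.2.2.1 hB hbB]
      exact ReflTransGen.single hbc_r
    have hedge := isEdge_of_dist_le hd hn hB ⟨c, rfl⟩ hbB ReflTransGen.refl hcB hbc_t
    exact ⟨_, ⟨⟨c, rfl⟩, hcomp.tail hedge⟩, ReflTransGen.refl⟩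

lemma mergeStep_thetaSL [Fintype X] (hd : IsMetric d) (hn : (Fintype.card X : ℝ) - 1 ≤ α)
    (r t : ℝ) :
    mergeStep d α t (thetaSL d r) = thetaSL d (max r t) := by
  have hblock : ∀ a : X,
      ⋃₀ {B | B ∈ thetaSL d r ∧ SameComp d α t (thetaSL d r) {w | HasChain d r a w} B} =
        {w | HasChain d (max r t) a w} := fun a =>
    (Set.sUnion_subset fun _ hB => subset_setOf_hasChain_of_sameComp hd.2.2.1 hB.2).antisymm
      (setOf_hasChain_subset_sUnion_sameComp hd hn a)
  ext C
  constructor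
  · rintro ⟨_, ⟨a, rfl⟩, rfl⟩
    exact ⟨a, hblock a⟩
  · rintro ⟨a, rfl⟩
    exact ⟨_, ⟨a, rfl⟩, (hblock a).symm⟩

lemma foldl_thetaSL {f : ℝ → Set (Set X) → Set (Set X)}
    (hf : ∀ r t, f t (thetaSL d r) = thetaSL d (max r t)) :
    ∀ (L : List ℝ) (r : ℝ),
      L.foldl (fun P t => f t P) (thetaSL d r) = thetaSL d (L.foldl max r)
  | [], _ => rfl
  | t :: L, r => by rw [List.foldl_cons, hf, List.foldl_cons, foldl_thetaSL hf L]

lemma le_foldl_max_distVals_iff [Fintype X] {t : ℝ} (ht : 0 ≤ t) (a b : X) :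
    d a b ≤ (distVals d t).foldl max 0 ↔ d a b ≤ t := by
  have hmem : ∀ {s},
      s ∈ distVals d t ↔ s ∈ Finset.image (fun p : X × X => d p.1 p.2) .univ ∧ s ≤ t := by
    simp only [distVals, Finset.mem_sort, Finset.mem_filter, implies_true]
  refine ⟨fun h => h.trans ((List.foldl_max_le_iff _ _ _).2 ⟨ht, fun s hs => (hmem.1 hs).2⟩),
    fun h => List.le_foldl_max_of_mem 0 (hmem.2 ⟨?_, h⟩)⟩
  exact Finset.mem_image.2 ⟨(a, b), Finset.mem_univ _, rfl⟩

end SingleLinkage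

theorem SLstar_eq_SL_of_large_alpha_general {X : Type} [Fintype X] (d : X → X → ℝ)
    (hd : IsMetric d) (α : ℝ)
    (hn : (Fintype.card X : ℝ) - 1 ≤ α) :
    (∀ t : ℝ, 0 ≤ t → thetaStar d α t = thetaSL d t) ∧
    (∀ x y, uStar d α x y = uSL d x y) := by
  have hθ : ∀ t : ℝ, 0 ≤ t → thetaStar d α t = thetaSL d t := by
    intro t ht
    have hstep (r s : ℝ) : mergeStepStar d α s (thetaSL d r) = thetaSL d (max r s) := by
      rw [mergeStepStar_thetaSL_eq_mergeStep hd.2.2.1 hn, mergeStep_thetaSL hd hn]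
    rw [thetaStar, ← thetaSL_zero hd, foldl_thetaSL hstep]
    exact thetaSL_congr (le_foldl_max_distVals_iff ht)
  refine ⟨hθ, fun x y => congrArg sInf (Set.ext fun r => and_congr_right fun hr => ?_)⟩
  rw [hθ r hr]
  exact exists_mem_thetaSL_iff hd.2.2.1

theorem SLstar_eq_SL_of_large_alpha {X : Type} [Fintype X] (d : X → X → ℝ)
    (hd : IsMetric d) (α : ℝ) (hα : 0 < α)
    (hn : (Fintype.card X : ℝ) - 1 ≤ α) :
    (∀ t : ℝ, 0 ≤ t → thetaStar d α t = thetaSL d t) ∧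
    (∀ x y, uStar d α x y = uSL d x y) :=
  SLstar_eq_SL_of_large_alpha_general d hd α hn
end

section
/- The outputs of SL(α) for different parameters are in general incomparable: there exist finite metric spaces (X,d) and parameters α > α' > 0 such that neither u_α(x,y) ≤ u_{α'}(x,y) for all x,y ∈ X, nor u_{α'}(x,y) ≤ u_α(x,y) for all x,y ∈ X. Likewise, there exist finite metric spaces (X,d) and parameters α > α' > 0 such that neither u*_α ≤ u*_{α'} pointwise nor u*_{α'} ≤ u*_α pointwise. -/
open Relation

/-!
One twelve-point space witnesses both statements. It consists of four triangles
`P = {0,1,2}`, `Q = {3,4,5}`, `R = {6,7,8}`, `S = {9,10,11}` of diameter 1; the bonds `03` and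
`69` have length 2, the other pairs of `P ∪ Q` and of `R ∪ S` have length 3, `0` is at distance 3
from `6` and `7`, and all remaining distances are 4.

For `α = 2` a two-point clique already links two triangles (of dimension 2) at scale 2, so `P ∪ Q`
and `R ∪ S` form; at scale 3 these blocks have dimension 5, while the largest clique across them
is `{0,6,7}`, so they merge only at scale 4. For `α = 1` the bonds of length 2 are too weak, but
at scale 3 the cliques `P ∪ Q`, `{0,6,7}` and `R ∪ S` connect all four triangles. Hence
`u₂(0,3) = 2 < 3 = u₁(0,3)` and `u₂(0,6) = 4 > 3 = u₁(0,6)`. Every partition that occurs has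
blocks of equal size, so for `α ≥ 1` all blocks are big and SL*(α) merges exactly as SL(α).
-/

section BlockGraph

variable {X : Type} {d : X → X → ℝ} {α t : ℝ} {P : Set (Set X)}

lemma IsEdge.symm (hd : ∀ x y, d x y = d y x) {B B' : Set X} (h : IsEdge d α t P B B') :
    IsEdge d α t P B' B := by
  obtain ⟨hB, hB', hne, ⟨x, hx, y, hy, hxy⟩, S, hS, hSB, hSB', hclique, hdim⟩ := h
  exact ⟨hB', hB, hne.symm, ⟨y, hy, x, hx, hd y x ▸ hxy⟩,
    S, Set.union_comm B B' ▸ hS, hSB', hSB, hclique, min_comm (dimF d t B) _ ▸ hdim⟩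

lemma sameComp_equivalence (hd : ∀ x y, d x y = d y x) : Equivalence (SameComp d α t P) := by
  have : Std.Symm (IsEdge d α t P) := ⟨fun _ _ => IsEdge.symm hd⟩
  exact ⟨fun _ => .refl, fun h => (ReflTransGen.stdSymm (r := IsEdge d α t P)).symm _ _ h,
    ReflTransGen.trans⟩

lemma dimF_coe_of_pairwise_le (F : Finset X) (hF : ∀ x ∈ F, ∀ y ∈ F, d x y ≤ t) :
    dimF d t F = F.card - 1 := by
  have hmem : (F.card : ℝ) - 1 ∈ { v : ℝ | ∃ S : Finset X, ↑S ⊆ (F : Set X) ∧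
      (∀ s ∈ S, ∀ s' ∈ S, d s s' ≤ t) ∧ v = (S.card : ℝ) - 1 } :=
    ⟨F, subset_rfl, hF, rfl⟩
  refine IsGreatest.csSup_eq ⟨hmem, ?_⟩
  rintro v ⟨S, hS, -, rfl⟩
  have : (S.card : ℝ) ≤ F.card := by exact_mod_cast Finset.card_le_card (Finset.coe_subset.1 hS)
  linarith

/-- A `t`-clique meeting `B` in `x` and `B'` in `y` lies in the common `t`-neighbourhood
of `x` and `y`. -/
lemma not_isEdge_of_commonNbhd (hα : 0 ≤ α) {B B' : Set X} (m : ℕ)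
    (hnbhd : ∀ x ∈ B, ∀ y ∈ B', d x y ≤ t →
      ∃ W : Finset X, W.card ≤ m ∧ ∀ s, d s x ≤ t → d s y ≤ t → s ∈ W)
    (hdim : α * ((m : ℝ) - 1) < min (dimF d t B) (dimF d t B')) :
    ¬ IsEdge d α t P B B' := by
  rintro ⟨-, -, -, -, S, -, ⟨x, hxS, hx⟩, ⟨y, hyS, hy⟩, hclique, hle⟩
  obtain ⟨W, hWm, hW⟩ := hnbhd x hx y hy (hclique x hxS y hyS)
  have hSW : S ⊆ W := fun s hs => hW s (hclique s hs x hxS) (hclique s hs y hyS)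
  have : (S.card : ℝ) ≤ m := by exact_mod_cast (Finset.card_le_card hSW).trans hWm
  nlinarith

lemma mergeStepStar_eq_mergeStep_s18 (hd : ∀ x y, d x y = d y x)
    (hbalanced : ∀ B ∈ P, ∀ B' ∈ P, (B'.ncard : ℝ) ≤ α * B.ncard) :
    mergeStepStar d α t P = mergeStep d α t P := by
  have hbig : ∀ B ∈ P, IsBig d α t P B :=
    fun B hB => ⟨hB, fun B' hB' _ => hbalanced B hB B' hB'⟩
  have hiff : ∀ B ∈ P, ∀ B' ∈ P,
      EqvGen (StarRel d α t P) B B' ↔ SameComp d α t P B B' := by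
    intro B hB B' hB'
    refine ⟨fun h => (sameComp_equivalence hd).eqvGen_iff.1
        (EqvGen.mono (fun _ _ h => h.2.2.1) _ _ h),
      fun h => .rel _ _ ⟨hB, hB', h, .inl ⟨hbig B hB, hbig B' hB', ?_⟩⟩⟩
    exact ReflTransGen.mono (fun C C' e => ⟨e, hbig C e.1, hbig C' e.2.1⟩) _ _ h
  ext C
  refine exists_congr fun B => and_congr_right fun hB => ?_
  rw [Set.sep_ext_iff.2 fun B' hB' => hiff B hB B' hB']

end BlockGraph

section Fibers

variable {X ι : Type} {d : X → X → ℝ} {α t : ℝ}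

def fibers (g : X → ι) : Set (Set X) := { C | ∃ x, C = { y | g y = g x } }

lemma exists_mem_fibers_iff (g : X → ι) {x y : X} :
    (∃ B ∈ fibers g, x ∈ B ∧ y ∈ B) ↔ g x = g y := by
  constructor
  · rintro ⟨_, ⟨z, rfl⟩, hx, hy⟩
    exact hx.trans (Eq.symm hy)
  · exact fun h => ⟨_, ⟨x, rfl⟩, rfl, h.symm⟩

lemma singletons_eq_fibers {g : X → ι} (hg : g.Injective) : singletons X = fibers g := by
  ext C
  refine exists_congr fun x => ?_
  rw [show { y | g y = g x } = {x} from Set.ext fun y => hg.eq_iff]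

lemma mergeStep_fibers {κ : Type} (g : X → ι) (g' : X → κ)
    (hcoarser : ∀ x y, g x = g y → g' x = g' y)
    (hedge : ∀ x y, IsEdge d α t (fibers g) {z | g z = g x} {z | g z = g y} → g' x = g' y)
    (hpath : ∀ x y, g' x = g' y →
      SameComp d α t (fibers g) {z | g z = g x} {z | g z = g y}) :
    mergeStep d α t (fibers g) = fibers g' := by
  have comp : ∀ x C, SameComp d α t (fibers g) {z | g z = g x} C →
      ∃ y, C = {z | g z = g y} ∧ g' x = g' y := by
    intro x C h
    induction h with
    | refl => exact ⟨x, rfl, rfl⟩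
    | tail _ e ih =>
      obtain ⟨y, rfl, hxy⟩ := ih
      obtain ⟨w, rfl⟩ := e.2.1
      exact ⟨w, rfl, hxy.trans (hedge y w e)⟩
  have hunion : ∀ x,
      ⋃₀ {B | B ∈ fibers g ∧ SameComp d α t (fibers g) {z | g z = g x} B} =
        {z | g' z = g' x} := by
    intro x
    ext z
    constructor
    · rintro ⟨C, ⟨-, hC⟩, hz⟩
      obtain ⟨y, rfl, hxy⟩ := comp x C hC
      exact (hcoarser z y hz).trans hxy.symm
    · exact fun hz => ⟨_, ⟨⟨z, rfl⟩, hpath x z hz.symm⟩, rfl⟩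
  ext C
  constructor
  · rintro ⟨_, ⟨x, rfl⟩, rfl⟩
    exact ⟨x, hunion x⟩
  · rintro ⟨x, rfl⟩
    exact ⟨_, ⟨x, rfl⟩, (hunion x).symm⟩

lemma mergeStep_fibers_self (g : X → ι)
    (hedge : ∀ x y, IsEdge d α t (fibers g) {z | g z = g x} {z | g z = g y} → g x = g y) :
    mergeStep d α t (fibers g) = fibers g :=
  mergeStep_fibers g g (fun _ _ => id) hedge fun x y hxy => by rw [hxy]; exact .refl

lemma mergeStep_fibers_of_hub (hd : ∀ x y, d x y = d y x) (g : X → ι) (x₀ : X)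
    (hub : ∀ x, SameComp d α t (fibers g) {z | g z = g x₀} {z | g z = g x}) :
    mergeStep d α t (fibers g) = fibers fun _ => () :=
  have hequiv := sameComp_equivalence (α := α) (t := t) (P := fibers g) hd
  mergeStep_fibers g _ (fun _ _ _ => rfl) (fun _ _ _ => rfl) fun x y _ =>
    hequiv.trans (hequiv.symm (hub x)) (hub y)

lemma label_eq_of_isEdge_fibers {κ : Type} {g : X → ι} {g' : X → κ}
    (hcoarser : ∀ x y, g x = g y → g' x = g' y) (hdist : ∀ a b, d a b ≤ t → g' a = g' b)
    {x y : X} (e : IsEdge d α t (fibers g) {z | g z = g x} {z | g z = g y}) : g' x = g' y := by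
  obtain ⟨-, -, -, ⟨a, ha, b, hb, hab⟩, -⟩ := e
  exact (hcoarser a x ha).symm.trans ((hdist a b hab).trans (hcoarser b y hb))

lemma isEdge_fibers_of_clique {g : X → ι} {x y : X} (hxy : g x ≠ g y) (S : Finset X)
    (hS : ∀ s ∈ S, g s = g x ∨ g s = g y) (hx : x ∈ S) (hy : y ∈ S)
    (hclique : ∀ s ∈ S, ∀ s' ∈ S, d s s' ≤ t)
    (hdim : min (dimF d t {z | g z = g x}) (dimF d t {z | g z = g y}) ≤
      α * ((S.card : ℝ) - 1)) :
    IsEdge d α t (fibers g) {z | g z = g x} {z | g z = g y} :=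
  ⟨⟨x, rfl⟩, ⟨y, rfl⟩, fun h => hxy (show x ∈ {z | g z = g y} from h ▸ rfl),
    ⟨x, rfl, y, rfl, hclique x hx y hy⟩,
    S, hS, ⟨x, hx, rfl⟩, ⟨y, hy, rfl⟩, hclique, hdim⟩

def AgreesOnUniformFibers (d : X → X → ℝ) (α : ℝ)
    (step : ℝ → Set (Set X) → Set (Set X)) : Prop :=
  ∀ t (g : X → ℕ) (n : ℕ), (∀ x, {z | g z = g x}.ncard = n) →
    step t (fibers g) = mergeStep d α t (fibers g)

lemma agreesOnUniformFibers_mergeStep (d : X → X → ℝ) (α : ℝ) :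
    AgreesOnUniformFibers d α (mergeStep d α) :=
  fun _ _ _ _ => rfl

lemma agreesOnUniformFibers_mergeStepStar (hd : ∀ x y, d x y = d y x) (hα : 1 ≤ α) :
    AgreesOnUniformFibers d α (mergeStepStar d α) := by
  intro t g n hn
  refine mergeStepStar_eq_mergeStep_s18 hd ?_
  rintro _ ⟨x, rfl⟩ _ ⟨y, rfl⟩
  rw [hn x, hn y]
  exact le_mul_of_one_le_left (Nat.cast_nonneg n) hα

variable [Fintype X] [DecidableEq ι]

lemma fiber_eq_coe_filter (g : X → ι) (x : X) :
    {z | g z = g x} = ↑(Finset.univ.filter fun z => g z = g x) := by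
  simp

lemma dimF_fiber (g : X → ι) (x : X)
    (hclique : ∀ a b, g a = g x → g b = g x → d a b ≤ t) :
    dimF d t {z | g z = g x} = (Finset.univ.filter fun z => g z = g x).card - 1 := by
  rw [fiber_eq_coe_filter]
  exact dimF_coe_of_pairwise_le _ fun a ha b hb =>
    hclique a b (Finset.mem_filter.1 ha).2 (Finset.mem_filter.1 hb).2

lemma ncard_fiber (g : X → ι) (x : X) :
    {z | g z = g x}.ncard = (Finset.univ.filter fun z => g z = g x).card := by
  rw [fiber_eq_coe_filter, Set.ncard_coe_finset]

end Fibers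

section SameBlock

variable {X : Type}

lemma sInf_sameBlock_eq {θ : ℝ → Set (Set X)} {x y : X} {t₀ : ℝ} (h₀ : 0 ≤ t₀)
    (hsame : ∃ B ∈ θ t₀, x ∈ B ∧ y ∈ B)
    (hsep : ∀ t, 0 ≤ t → t < t₀ → ¬ ∃ B ∈ θ t, x ∈ B ∧ y ∈ B) :
    sInf {t | 0 ≤ t ∧ ∃ B ∈ θ t, x ∈ B ∧ y ∈ B} = t₀ :=
  IsLeast.csInf_eq ⟨⟨h₀, hsame⟩, fun t ⟨ht, h⟩ => not_lt.1 fun hlt => hsep t ht hlt h⟩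

end SameBlock

section DistVals

variable {X : Type} [Fintype X] {d : X → X → ℝ}

lemma distVals_congr {s t : ℝ} (h : ∀ x y, d x y ≤ s ↔ d x y ≤ t) :
    distVals d s = distVals d t := by
  unfold distVals
  congr 1
  refine Finset.filter_congr fun r hr => ?_
  obtain ⟨⟨x, y⟩, -, rfl⟩ := Finset.mem_image.1 hr
  exact h x y

lemma mem_distVals {r t : ℝ} : r ∈ distVals d t ↔ (∃ x y, d x y = r) ∧ r ≤ t := by
  simp [distVals]

lemma distVals_eq_nil {s : ℝ} (h : ∀ x y, s < d x y) : distVals d s = [] :=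
  List.eq_nil_iff_forall_not_mem.2 fun r hr => by
    obtain ⟨⟨x, y, rfl⟩, hr⟩ := mem_distVals.1 hr
    exact (h x y).not_ge hr

lemma distVals_eq_append {s t : ℝ} (hst : s < t) (ht : ∃ x y, d x y = t)
    (hgap : ∀ x y, s < d x y → d x y ≤ t → d x y = t) :
    distVals d t = distVals d s ++ [t] := by
  have hle : ∀ r ∈ distVals d s, r ≤ s := fun r hr => (mem_distVals.1 hr).2
  have hnodup : (distVals d s ++ [t]).Nodup := by
    refine List.nodup_append.2 ⟨Finset.sort_nodup _ _, List.nodup_singleton t, ?_⟩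
    simp only [List.mem_singleton]
    rintro r hr _ rfl rfl
    exact (hle _ hr).not_gt hst
  have hsorted : (distVals d s ++ [t]).Pairwise (· ≤ ·) := by
    refine List.pairwise_append.2 ⟨Finset.pairwise_sort _ _, List.pairwise_singleton _ _, ?_⟩
    simp only [List.mem_singleton]
    rintro r hr _ rfl
    exact (hle r hr).trans hst.le
  rw [← (List.toFinset_sort _ hnodup).2 hsorted, distVals]
  congr 1
  ext r
  simp only [Finset.mem_filter, Finset.mem_image, Finset.mem_univ, true_and, Prod.exists,
    List.mem_toFinset, List.mem_append, List.mem_singleton, mem_distVals]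
  constructor
  · rintro ⟨⟨x, y, rfl⟩, hr⟩
    rcases le_or_gt (d x y) s with hs | hs
    · exact .inl ⟨⟨x, y, rfl⟩, hs⟩
    · exact .inr (hgap x y hs hr)
  · rintro (⟨hr, hs⟩ | rfl)
    · exact ⟨hr, hs.trans hst.le⟩
    · exact ⟨ht, le_rfl⟩

end DistVals

section MergeDendrogram

variable {X : Type} [Fintype X]

/-- `theta d α`, `thetaStar d α`, `uAlpha d α` and `uStar d α` unfold to `mergeDendrogram` and
`mergeUltrametric` with `step = mergeStep d α` or `step = mergeStepStar d α`. -/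
noncomputable def mergeDendrogram (d : X → X → ℝ) (step : ℝ → Set (Set X) → Set (Set X))
    (t : ℝ) : Set (Set X) :=
  (distVals d t).foldl (fun P s => step s P) (singletons X)

noncomputable def mergeUltrametric (d : X → X → ℝ)
    (step : ℝ → Set (Set X) → Set (Set X)) (x y : X) : ℝ :=
  sInf { t : ℝ | 0 ≤ t ∧ ∃ B ∈ mergeDendrogram d step t, x ∈ B ∧ y ∈ B }

variable (D : X → X → ℕ) (step : ℝ → Set (Set X) → Set (Set X))

lemma mergeDendrogram_natCast_floor {t : ℝ} (ht : 0 ≤ t) :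
    mergeDendrogram (fun x y => (D x y : ℝ)) step t =
      mergeDendrogram (fun x y => (D x y : ℝ)) step ⌊t⌋₊ := by
  unfold mergeDendrogram
  rw [distVals_congr fun x y => (Nat.le_floor_iff ht).symm.trans Nat.cast_le.symm]

lemma mergeDendrogram_natCast_zero (x : X) (hx : D x x = 0) :
    mergeDendrogram (fun x y => (D x y : ℝ)) step (0 : ℕ) =
      step (0 : ℕ) (singletons X) := by
  unfold mergeDendrogram
  rw [Nat.cast_zero]
  have hnonneg : ∀ x y, (0 : ℝ) ≤ D x y := fun x y => Nat.cast_nonneg _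
  rw [distVals_eq_append (s := -1) (by norm_num) ⟨x, x, by simp [hx]⟩
      (fun x y _ h => le_antisymm (by exact_mod_cast h) (hnonneg x y)),
    distVals_eq_nil fun x y => by linarith [hnonneg x y]]
  rfl

lemma mergeDendrogram_natCast_succ {m n : ℕ} (hmn : m = n + 1) (hm : ∃ x y, D x y = m) :
    mergeDendrogram (fun x y => (D x y : ℝ)) step m =
      step m (mergeDendrogram (fun x y => (D x y : ℝ)) step n) := by
  unfold mergeDendrogram
  obtain ⟨x, y, hxy⟩ := hm
  have hgap : ∀ a b, (n : ℝ) < D a b → (D a b : ℝ) ≤ m → (D a b : ℝ) = m := by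
    intro a b h₁ h₂
    have h₁' : n < D a b := by exact_mod_cast h₁
    have h₂' : D a b ≤ m := by exact_mod_cast h₂
    exact_mod_cast (show D a b = m by omega)
  rw [distVals_eq_append (by rw [hmn]; exact_mod_cast n.lt_succ_self) ⟨x, y, by rw [hxy]⟩ hgap,
    List.foldl_append]
  rfl

lemma mergeUltrametric_natCast_eq {x y : X} {n : ℕ}
    (hsame : ∃ B ∈ mergeDendrogram (fun x y => (D x y : ℝ)) step n, x ∈ B ∧ y ∈ B)
    (hsep : ∀ k < n,
      ¬ ∃ B ∈ mergeDendrogram (fun x y => (D x y : ℝ)) step k, x ∈ B ∧ y ∈ B) :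
    mergeUltrametric (fun x y => (D x y : ℝ)) step x y = n := by
  refine sInf_sameBlock_eq (Nat.cast_nonneg n) hsame fun t ht hlt => ?_
  rw [mergeDendrogram_natCast_floor D step ht]
  exact hsep _ ((Nat.floor_lt ht).2 hlt)

end MergeDendrogram

section Example

def tri (i : Fin 12) : ℕ := i / 3

def half (i : Fin 12) : ℕ := i / 6

def triDist (i j : Fin 12) : ℕ :=
  if i = j then 0
  else if tri i = tri j then 1
  else if (min i j, max i j) ∈ [(0, 3), (6, 9)] then 2
  else if half i = half j ∨ (min i j, max i j) ∈ [(0, 6), (0, 7)] then 3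
  else 4

abbrev triMetric (i j : Fin 12) : ℝ := triDist i j

lemma triDist_self (a : Fin 12) : triDist a a = 0 := by
  simp [triDist]

lemma triDist_comm (a b : Fin 12) : triDist a b = triDist b a := by
  revert a b; decide

lemma triDist_le_zero_iff {a b : Fin 12} : triDist a b ≤ 0 ↔ a.val = b.val := by
  revert a b; decide

lemma triDist_le_one_iff {a b : Fin 12} : triDist a b ≤ 1 ↔ tri a = tri b := by
  revert a b; decide

lemma isMetric_triMetric : IsMetric triMetric := by
  refine ⟨fun x y => Nat.cast_nonneg _, fun x y => ?_, fun x y => ?_, fun x y z => ?_⟩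
  · rw [Nat.cast_eq_zero, ← Fin.val_inj, ← triDist_le_zero_iff, Nat.le_zero]
  · exact congrArg Nat.cast (triDist_comm x y)
  · exact_mod_cast (by decide : ∀ x y z, triDist x z ≤ triDist x y + triDist y z) x y z

lemma triMetric_le_iff {x y : Fin 12} {n : ℕ} : triMetric x y ≤ n ↔ triDist x y ≤ n :=
  Nat.cast_le

lemma triMetric_clique {S : Finset (Fin 12)} {n : ℕ}
    (h : ∀ s ∈ S, ∀ s' ∈ S, triDist s s' ≤ n) :
    ∀ s ∈ S, ∀ s' ∈ S, triMetric s s' ≤ n :=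
  fun s hs s' hs' => triMetric_le_iff.2 (h s hs s' hs')

lemma triMetric_pair_clique {x y : Fin 12} {n : ℕ} (h : triDist x y ≤ n) :
    ∀ s ∈ ({x, y} : Finset (Fin 12)), ∀ s' ∈ ({x, y} : Finset (Fin 12)),
      triMetric s s' ≤ n :=
  triMetric_clique (by simp [triDist_self, triDist_comm y x, h])

lemma triMetric_commonNbhd {g : Fin 12 → ℕ} {n m : ℕ}
    (hcard : ∀ a b, g a ≠ g b → triDist a b ≤ n →
      (Finset.univ.filter fun s => triDist s a ≤ n ∧ triDist s b ≤ n).card ≤ m)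
    {x y : Fin 12} (hxy : g x ≠ g y) :
    ∀ a ∈ {z | g z = g x}, ∀ b ∈ {z | g z = g y}, triMetric a b ≤ n →
      ∃ W : Finset (Fin 12), W.card ≤ m ∧
        ∀ s, triMetric s a ≤ n → triMetric s b ≤ n → s ∈ W :=
  fun a ha b hb hab =>
    ⟨_, hcard a b (fun h => hxy (ha.symm.trans (h.trans hb))) (triMetric_le_iff.1 hab),
      fun s hsa hsb => Finset.mem_filter.2
        ⟨Finset.mem_univ s, triMetric_le_iff.1 hsa, triMetric_le_iff.1 hsb⟩⟩

lemma ncard_fiber_val (x : Fin 12) : {z : Fin 12 | z.val = x.val}.ncard = 1 := by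
  rw [ncard_fiber]; revert x; decide

lemma ncard_fiber_tri (x : Fin 12) : {z | tri z = tri x}.ncard = 3 := by
  rw [ncard_fiber]; revert x; decide

lemma ncard_fiber_half (x : Fin 12) : {z | half z = half x}.ncard = 6 := by
  rw [ncard_fiber]; revert x; decide

lemma dimF_fiber_val (n : ℕ) (x : Fin 12) : dimF triMetric n {z | z.val = x.val} = 0 := by
  rw [dimF_fiber _ _ fun a b ha hb => triMetric_le_iff.2 <| by
      rw [Fin.val_inj.1 (ha.trans hb.symm), triDist_self]; exact n.zero_le,
    ← ncard_fiber, ncard_fiber_val]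
  norm_num

lemma dimF_fiber_tri {n : ℕ} (hn : 1 ≤ n) (x : Fin 12) :
    dimF triMetric n {z | tri z = tri x} = 2 := by
  rw [dimF_fiber _ _ fun a b ha hb =>
      triMetric_le_iff.2 ((triDist_le_one_iff.2 (ha.trans hb.symm)).trans hn),
    ← ncard_fiber, ncard_fiber_tri]
  norm_num

lemma dimF_fiber_half {n : ℕ} (hn : 3 ≤ n) (x : Fin 12) :
    dimF triMetric n {z | half z = half x} = 5 := by
  rw [dimF_fiber _ _ fun a b ha hb => triMetric_le_iff.2 <| le_trans
      ((by decide : ∀ a b, half a = half b → triDist a b ≤ 3) a b (ha.trans hb.symm)) hn,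
    ← ncard_fiber, ncard_fiber_half]
  norm_num

lemma mergeStep_triMetric_zero {α : ℝ} :
    mergeStep triMetric α (0 : ℕ) (fibers Fin.val) = fibers Fin.val :=
  mergeStep_fibers_self _ fun _ _ e => label_eq_of_isEdge_fibers (fun _ _ => id)
    (fun _ _ h => triDist_le_zero_iff.1 (triMetric_le_iff.1 h)) e

lemma mergeStep_triMetric_one {α : ℝ} (hα : 1 ≤ α) :
    mergeStep triMetric α (1 : ℕ) (fibers Fin.val) = fibers tri := by
  have hcoarser : ∀ x y : Fin 12, x.val = y.val → tri x = tri y :=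
    fun x y h => by rw [Fin.val_inj.1 h]
  refine mergeStep_fibers _ _ hcoarser (fun _ _ e => label_eq_of_isEdge_fibers hcoarser
    (fun _ _ h => triDist_le_one_iff.1 (triMetric_le_iff.1 h)) e) fun x y hxy => ?_
  by_cases hval : x.val = y.val
  · rw [hval]
    exact .refl
  refine .single (isEdge_fibers_of_clique hval {x, y} (by simp) (by simp) (by simp)
    (triMetric_pair_clique (triDist_le_one_iff.2 hxy)) ?_)
  rw [dimF_fiber_val, dimF_fiber_val, Finset.card_pair (mt (congrArg Fin.val) hval)]
  norm_num
  linarith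

lemma mergeStep_triMetric_two_two :
    mergeStep triMetric 2 (2 : ℕ) (fibers tri) = fibers half := by
  have edge (x y : Fin 12) (hxy : tri x ≠ tri y) (hd : triDist x y ≤ 2) :
      IsEdge triMetric 2 (2 : ℕ) (fibers tri) {z | tri z = tri x} {z | tri z = tri y} := by
    refine isEdge_fibers_of_clique hxy {x, y} (by simp) (by simp) (by simp)
      (triMetric_pair_clique hd) ?_
    rw [dimF_fiber_tri one_le_two, dimF_fiber_tri one_le_two,
      Finset.card_pair fun h => hxy (congrArg tri h)]
    norm_num
  refine mergeStep_fibers _ _ (by decide) (fun _ _ e => label_eq_of_isEdge_fibers (by decide)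
    (fun a b h => (by decide : ∀ a b, triDist a b ≤ 2 → half a = half b) a b
      (triMetric_le_iff.1 h)) e) fun x y hxy => ?_
  rcases (by decide : ∀ x y, half x = half y → tri x = tri y ∨
      (tri x = tri 0 ∧ tri y = tri 3) ∨ (tri x = tri 3 ∧ tri y = tri 0) ∨
      (tri x = tri 6 ∧ tri y = tri 9) ∨ (tri x = tri 9 ∧ tri y = tri 6)) x y hxy with
    h | ⟨hx, hy⟩ | ⟨hx, hy⟩ | ⟨hx, hy⟩ | ⟨hx, hy⟩
  · rw [h]
    exact .refl
  all_goals rw [hx, hy]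
  exacts [.single (edge 0 3 (by decide) (by decide)), .single (edge 3 0 (by decide) (by decide)),
    .single (edge 6 9 (by decide) (by decide)), .single (edge 9 6 (by decide) (by decide))]

lemma mergeStep_triMetric_one_two :
    mergeStep triMetric 1 (2 : ℕ) (fibers tri) = fibers tri :=
  mergeStep_fibers_self _ fun _ _ e => by_contra fun hxy =>
    not_isEdge_of_commonNbhd zero_le_one 2 (triMetric_commonNbhd (by decide) hxy)
      (by rw [dimF_fiber_tri one_le_two, dimF_fiber_tri one_le_two]; norm_num) e

lemma mergeStep_triMetric_two_three :
    mergeStep triMetric 2 (3 : ℕ) (fibers half) = fibers half :=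
  mergeStep_fibers_self _ fun _ _ e => by_contra fun hxy =>
    not_isEdge_of_commonNbhd zero_le_two 3 (triMetric_commonNbhd (by decide) hxy)
      (by rw [dimF_fiber_half le_rfl, dimF_fiber_half le_rfl]; norm_num) e

lemma mergeStep_triMetric_one_three :
    mergeStep triMetric 1 (3 : ℕ) (fibers tri) = fibers fun _ => () := by
  have edge (x y : Fin 12) (S : Finset (Fin 12)) (hxy : tri x ≠ tri y)
      (hS : ∀ s ∈ S, tri s = tri x ∨ tri s = tri y) (hx : x ∈ S) (hy : y ∈ S)
      (hclique : ∀ s ∈ S, ∀ s' ∈ S, triDist s s' ≤ 3) (hcard : 3 ≤ S.card) :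
      IsEdge triMetric 1 (3 : ℕ) (fibers tri) {z | tri z = tri x} {z | tri z = tri y} := by
    refine isEdge_fibers_of_clique hxy S hS hx hy (triMetric_clique hclique) ?_
    rw [dimF_fiber_tri (by norm_num), dimF_fiber_tri (by norm_num)]
    have : (3 : ℝ) ≤ S.card := by exact_mod_cast hcard
    linarith [min_le_left (2 : ℝ) 2]
  have e03 := edge 0 3 {0, 1, 2, 3, 4, 5}
    (by decide) (by decide) (by decide) (by decide) (by decide) (by decide)
  have e06 := edge 0 6 {0, 6, 7} (by decide) (by decide) (by decide) (by decide) (by decide)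
    (by decide)
  have e69 := edge 6 9 {6, 7, 8, 9, 10, 11}
    (by decide) (by decide) (by decide) (by decide) (by decide) (by decide)
  refine mergeStep_fibers_of_hub isMetric_triMetric.2.2.1 _ 0 fun x => ?_
  rcases (by decide : ∀ x, tri x = tri 0 ∨ tri x = tri 3 ∨ tri x = tri 6 ∨ tri x = tri 9) x
    with h | h | h | h <;> rw [h]
  exacts [.refl, .single e03, .single e06, .tail (.single e06) e69]

lemma mergeStep_triMetric_two_four :
    mergeStep triMetric 2 (4 : ℕ) (fibers half) = fibers fun _ => () := by
  have e : IsEdge triMetric 2 (4 : ℕ) (fibers half)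
      {z | half z = half 0} {z | half z = half 6} := by
    refine isEdge_fibers_of_clique (by decide) Finset.univ (by decide) (by decide) (by decide)
      (triMetric_clique (by decide)) ?_
    rw [dimF_fiber_half (by norm_num), dimF_fiber_half (by norm_num), Finset.card_univ,
      Fintype.card_fin]
    norm_num
  refine mergeStep_fibers_of_hub isMetric_triMetric.2.2.1 _ 0 fun x => ?_
  rcases (by decide : ∀ x, half x = half 0 ∨ half x = half 6) x with h | h <;> rw [h]
  exacts [.refl, .single e]

variable {step : ℝ → Set (Set (Fin 12)) → Set (Set (Fin 12))}

lemma mergeDendrogram_triMetric_zero {α : ℝ} (hstep : AgreesOnUniformFibers triMetric α step) :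
    mergeDendrogram triMetric step (0 : ℕ) = fibers Fin.val := by
  rw [mergeDendrogram_natCast_zero triDist step 0 (triDist_self 0),
    singletons_eq_fibers Fin.val_injective, hstep _ _ 1 ncard_fiber_val, mergeStep_triMetric_zero]

lemma mergeDendrogram_triMetric_one {α : ℝ} (hα : 1 ≤ α)
    (hstep : AgreesOnUniformFibers triMetric α step) :
    mergeDendrogram triMetric step (1 : ℕ) = fibers tri := by
  rw [mergeDendrogram_natCast_succ triDist step (n := 0) rfl ⟨0, 1, rfl⟩,
    mergeDendrogram_triMetric_zero hstep, hstep _ _ 1 ncard_fiber_val, mergeStep_triMetric_one hα]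

lemma mergeDendrogram_triMetric_two_two (hstep : AgreesOnUniformFibers triMetric 2 step) :
    mergeDendrogram triMetric step (2 : ℕ) = fibers half := by
  rw [mergeDendrogram_natCast_succ triDist step (n := 1) rfl ⟨0, 3, rfl⟩,
    mergeDendrogram_triMetric_one one_le_two hstep, hstep _ _ 3 ncard_fiber_tri,
    mergeStep_triMetric_two_two]

lemma mergeDendrogram_triMetric_two_three (hstep : AgreesOnUniformFibers triMetric 2 step) :
    mergeDendrogram triMetric step (3 : ℕ) = fibers half := by
  rw [mergeDendrogram_natCast_succ triDist step (n := 2) rfl ⟨0, 6, rfl⟩,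
    mergeDendrogram_triMetric_two_two hstep, hstep _ _ 6 ncard_fiber_half,
    mergeStep_triMetric_two_three]

lemma mergeDendrogram_triMetric_two_four (hstep : AgreesOnUniformFibers triMetric 2 step) :
    mergeDendrogram triMetric step (4 : ℕ) = fibers fun _ => () := by
  rw [mergeDendrogram_natCast_succ triDist step (n := 3) rfl ⟨0, 9, rfl⟩,
    mergeDendrogram_triMetric_two_three hstep, hstep _ _ 6 ncard_fiber_half,
    mergeStep_triMetric_two_four]

lemma mergeDendrogram_triMetric_one_two (hstep : AgreesOnUniformFibers triMetric 1 step) :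
    mergeDendrogram triMetric step (2 : ℕ) = fibers tri := by
  rw [mergeDendrogram_natCast_succ triDist step (n := 1) rfl ⟨0, 3, rfl⟩,
    mergeDendrogram_triMetric_one le_rfl hstep, hstep _ _ 3 ncard_fiber_tri,
    mergeStep_triMetric_one_two]

lemma mergeDendrogram_triMetric_one_three (hstep : AgreesOnUniformFibers triMetric 1 step) :
    mergeDendrogram triMetric step (3 : ℕ) = fibers fun _ => () := by
  rw [mergeDendrogram_natCast_succ triDist step (n := 2) rfl ⟨0, 6, rfl⟩,
    mergeDendrogram_triMetric_one_two hstep, hstep _ _ 3 ncard_fiber_tri,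
    mergeStep_triMetric_one_three]

lemma mergeUltrametric_triMetric_two (hstep : AgreesOnUniformFibers triMetric 2 step) :
    mergeUltrametric triMetric step 0 3 = 2 ∧ mergeUltrametric triMetric step 0 6 = 4 := by
  constructor
  · refine (mergeUltrametric_natCast_eq triDist step (n := 2) ?_ fun k hk => ?_).trans
      (by norm_num)
    · rw [mergeDendrogram_triMetric_two_two hstep, exists_mem_fibers_iff]; decide
    interval_cases k
    · rw [mergeDendrogram_triMetric_zero hstep, exists_mem_fibers_iff]; decide
    · rw [mergeDendrogram_triMetric_one one_le_two hstep, exists_mem_fibers_iff]; decide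
  · refine (mergeUltrametric_natCast_eq triDist step (n := 4) ?_ fun k hk => ?_).trans
      (by norm_num)
    · rw [mergeDendrogram_triMetric_two_four hstep, exists_mem_fibers_iff]
    interval_cases k
    · rw [mergeDendrogram_triMetric_zero hstep, exists_mem_fibers_iff]; decide
    · rw [mergeDendrogram_triMetric_one one_le_two hstep, exists_mem_fibers_iff]; decide
    · rw [mergeDendrogram_triMetric_two_two hstep, exists_mem_fibers_iff]; decide
    · rw [mergeDendrogram_triMetric_two_three hstep, exists_mem_fibers_iff]; decide

lemma mergeUltrametric_triMetric_one (hstep : AgreesOnUniformFibers triMetric 1 step) :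
    mergeUltrametric triMetric step 0 3 = 3 ∧ mergeUltrametric triMetric step 0 6 = 3 := by
  have hsep : ∀ y, tri 0 ≠ tri y → ∀ k : ℕ, k < 3 →
      ¬ ∃ B ∈ mergeDendrogram triMetric step k, 0 ∈ B ∧ y ∈ B := by
    intro y hy k hk
    interval_cases k
    · rw [mergeDendrogram_triMetric_zero hstep, exists_mem_fibers_iff]
      exact fun h => hy (congrArg (· / 3) h)
    · rw [mergeDendrogram_triMetric_one le_rfl hstep, exists_mem_fibers_iff]; exact hy
    · rw [mergeDendrogram_triMetric_one_two hstep, exists_mem_fibers_iff]; exact hy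
  have hsame : ∀ y, ∃ B ∈ mergeDendrogram triMetric step (3 : ℕ), 0 ∈ B ∧ y ∈ B := by
    intro y
    rw [mergeDendrogram_triMetric_one_three hstep, exists_mem_fibers_iff]
  exact ⟨(mergeUltrametric_natCast_eq triDist step (hsame 3) (hsep 3 (by decide))).trans
      (by norm_num),
    (mergeUltrametric_natCast_eq triDist step (hsame 6) (hsep 6 (by decide))).trans
      (by norm_num)⟩

lemma mergeUltrametric_triMetric_incomparable
    {step' : ℝ → Set (Set (Fin 12)) → Set (Set (Fin 12))}
    (hstep : AgreesOnUniformFibers triMetric 2 step)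
    (hstep' : AgreesOnUniformFibers triMetric 1 step') :
    ¬ (∀ x y, mergeUltrametric triMetric step x y ≤ mergeUltrametric triMetric step' x y) ∧
    ¬ (∀ x y, mergeUltrametric triMetric step' x y ≤ mergeUltrametric triMetric step x y) := by
  obtain ⟨h03, h06⟩ := mergeUltrametric_triMetric_two hstep
  obtain ⟨h03', h06'⟩ := mergeUltrametric_triMetric_one hstep'
  refine ⟨fun h => ?_, fun h => ?_⟩
  · have := h 0 6
    rw [h06, h06'] at this
    norm_num at this
  · have := h 0 3
    rw [h03, h03'] at this
    norm_num at this

end Example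

theorem SLalpha_SLstar_incomparable :
    (∃ (X : Type) (iX : Fintype X) (d : X → X → ℝ) (_ : IsMetric d) (α α' : ℝ),
      0 < α' ∧ α' < α ∧
      ¬ (∀ x y, @uAlpha X iX d α x y ≤ @uAlpha X iX d α' x y) ∧
      ¬ (∀ x y, @uAlpha X iX d α' x y ≤ @uAlpha X iX d α x y)) ∧
    (∃ (X : Type) (iX : Fintype X) (d : X → X → ℝ) (_ : IsMetric d) (α α' : ℝ),
      0 < α' ∧ α' < α ∧
      ¬ (∀ x y, @uStar X iX d α x y ≤ @uStar X iX d α' x y) ∧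
      ¬ (∀ x y, @uStar X iX d α' x y ≤ @uStar X iX d α x y)) :=
  have hsymm := isMetric_triMetric.2.2.1
  ⟨⟨Fin 12, inferInstance, triMetric, isMetric_triMetric, 2, 1, one_pos, one_lt_two,
      mergeUltrametric_triMetric_incomparable (agreesOnUniformFibers_mergeStep _ _)
        (agreesOnUniformFibers_mergeStep _ _)⟩,
    ⟨Fin 12, inferInstance, triMetric, isMetric_triMetric, 2, 1, one_pos, one_lt_two,
      mergeUltrametric_triMetric_incomparable
        (agreesOnUniformFibers_mergeStepStar hsymm one_le_two)
        (agreesOnUniformFibers_mergeStepStar hsymm le_rfl)⟩⟩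
end
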